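/- arXiv:1804.01499 — 2 statements merged into one kernel-verified Lean document; each statement's English description precedes it below -/
import Mathlib

section
/- Let X be a compact Hausdorff space, E a Banach space over 𝕂 ∈ {ℝ, ℂ}, and A a 𝕂-linear subspace of C(X,E). Then every maximal convex subset of S(A) is of the form V^A_{x,K} for some x ∈ X and some maximal convex subset K of S(E). -/
open Set Metric

variable {𝕂 : Type*} [RCLike 𝕂]
variable {X : Type*} [TopologicalSpace X] [CompactSpace X] [T2Space X]
variable {E : Type*} [NormedAddCommGroup E] [NormedSpace ℝ E] [NormedSpace 𝕂 E]
  [IsScalarTower ℝ 𝕂 E] [CompleteSpace E]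

/-- `C` is a maximal convex subset of `S` (convexity over `ℝ`). -/
def MaxConvexIn {M : Type*} [AddCommGroup M] [Module ℝ M] (S C : Set M) : Prop :=
  C ⊆ S ∧ Convex ℝ C ∧ ∀ C' : Set M, C' ⊆ S → Convex ℝ C' → C ⊆ C' → C' = C

/-- The unit sphere `S(A)` of the subspace `A` of `C(X,E)`. -/
def unitSphereOf (A : Subspace 𝕂 C(X, E)) : Set C(X, E) :=
  {f | f ∈ A ∧ ‖f‖ = 1}

/-- The set `V^A_{x,K} = {f ∈ S(A) : f(x) ∈ K}`. -/
def Vset (A : Subspace 𝕂 C(X, E)) (x : X) (K : Set E) : Set C(X, E) :=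
  {f | f ∈ A ∧ ‖f‖ = 1 ∧ f x ∈ K}

/-- A continuous function on a nonempty compact space attains its norm. -/
theorem exists_norm_apply_eq_norm [Nonempty X] (f : C(X, E)) : ∃ x : X, ‖f x‖ = ‖f‖ := by
  obtain ⟨x, hx⟩ := f.continuous.norm.exists_forall_ge (by simp [Filter.cocompact_eq_bot])
  refine ⟨x, le_antisymm (f.norm_coe_le_norm x) ?_⟩
  exact (ContinuousMap.norm_le f (norm_nonneg _)).mpr hx

/-- Any convex subset of the unit sphere extends to a maximal one. -/
theorem exists_maxConvexIn_superset (K₀ : Set E) (h₀s : K₀ ⊆ sphere (0 : E) 1)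
    (h₀c : Convex ℝ K₀) :
    ∃ K : Set E, K₀ ⊆ K ∧ MaxConvexIn (sphere (0 : E) 1) K := by
  obtain ⟨K, hK₀K, hKmax⟩ := zorn_subset_nonempty
    {K : Set E | K ⊆ sphere (0 : E) 1 ∧ Convex ℝ K}
    (fun c hc hchain hcne => by
      refine ⟨⋃₀ c, ⟨sUnion_subset fun s hs => (hc hs).1, ?_⟩, fun s hs => subset_sUnion_of_mem hs⟩
      intro y hy z hz a b ha hb hab
      obtain ⟨s, hs, hys⟩ := hy
      obtain ⟨s', hs', hzs'⟩ := hz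
      rcases hchain.total hs hs' with h | h
      · exact ⟨s', hs', (hc hs').2 (h hys) hzs' ha hb hab⟩
      · exact ⟨s, hs, (hc hs).2 hys (h hzs') ha hb hab⟩)
    K₀ ⟨h₀s, h₀c⟩
  exact ⟨K, hK₀K, hKmax.1.1, hKmax.1.2,
    fun K' hK's hK'c hKK' => le_antisymm (hKmax.2 ⟨hK's, hK'c⟩ hKK') hKK'⟩

/-- Every maximal convex subset of `S(A)` is of the form `V^A_{x,K}` for some
`x ∈ X` and some maximal convex subset `K` of `S(E)`. -/
theorem stmt1 [Nonempty X] (A : Subspace 𝕂 C(X, E)) (C : Set C(X, E))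
    (hC : MaxConvexIn (unitSphereOf A) C) :
    ∃ (x : X) (K : Set E),
      MaxConvexIn (sphere (0 : E) 1) K ∧ C = Vset A x K := by
  classical
  obtain ⟨hCsub, hconv, hmax⟩ := hC
  -- the sets where elements of `C` attain their norm
  set Z : C → Set X := fun f => {x | ‖(f : C(X, E)) x‖ = 1} with hZdef
  have hZc : ∀ f : C, IsClosed (Z f) := fun f =>
    isClosed_eq (f : C(X, E)).continuous.norm continuous_const
  -- there is a common point where all elements of `C` attain their norm
  have hne : (⋂ f : C, Z f).Nonempty := by
    by_contra h
    rw [Set.not_nonempty_iff_eq_empty] at h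
    have h' : (Set.univ ∩ ⋂ f : C, Z f) = ∅ := by rw [Set.univ_inter]; exact h
    obtain ⟨t, ht⟩ := isCompact_univ.elim_finite_subfamily_closed Z hZc h'
    rw [Set.univ_inter] at ht
    rcases Finset.eq_empty_or_nonempty t with h0 | h0
    · rw [h0] at ht
      simp only [Finset.notMem_empty, Set.iInter_of_empty, Set.iInter_univ] at ht
      exact (Set.univ_nonempty (α := X)).ne_empty ht
    have hcard : (0 : ℝ) < (t.card : ℝ) := by
      exact_mod_cast Finset.card_pos.mpr h0
    set g : C(X, E) := ∑ f ∈ t, ((t.card : ℝ)⁻¹ : ℝ) • (f : C(X, E)) with hgdef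
    have hg : g ∈ C := by
      refine hconv.sum_mem (fun i _ => by positivity) ?_ (fun i _ => i.2)
      rw [Finset.sum_const, nsmul_eq_mul, mul_inv_cancel₀ (ne_of_gt hcard)]
    have hgnorm : ‖g‖ = 1 := (hCsub hg).2
    obtain ⟨x, hx⟩ := exists_norm_apply_eq_norm g
    rw [hgnorm] at hx
    -- all members of `t` attain their norm at `x`
    have hall : ∀ i ∈ t, ‖(i : C(X, E)) x‖ = 1 := by
      by_contra hcon
      push_neg at hcon
      obtain ⟨i₀, hi₀t, hi₀⟩ := hcon
      have hle : ∀ i : C, i ∈ t → ‖(i : C(X, E)) x‖ ≤ 1 := fun i _ => by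
        have := (i : C(X, E)).norm_coe_le_norm x
        rwa [(hCsub i.2).2] at this
      have h1 : ‖g x‖ ≤ ∑ i ∈ t, (t.card : ℝ)⁻¹ * ‖(i : C(X, E)) x‖ := by
        rw [hgdef]
        simp only [ContinuousMap.coe_sum, ContinuousMap.coe_smul, Finset.sum_apply,
          Pi.smul_apply]
        refine (norm_sum_le _ _).trans ?_
        refine Finset.sum_le_sum fun i _ => ?_
        rw [norm_smul, Real.norm_eq_abs, abs_of_pos (by positivity)]
      have h2 : ∑ i ∈ t, (t.card : ℝ)⁻¹ * ‖(i : C(X, E)) x‖ <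
          ∑ i ∈ t, (t.card : ℝ)⁻¹ * 1 := by
        refine Finset.sum_lt_sum (fun i hi => by
          have := hle i hi
          nlinarith [inv_pos.mpr hcard]) ⟨i₀, hi₀t, ?_⟩
        have := lt_of_le_of_ne (hle i₀ hi₀t) hi₀
        exact mul_lt_mul_of_pos_left this (inv_pos.mpr hcard)
      have h3 : ∑ i ∈ t, (t.card : ℝ)⁻¹ * (1 : ℝ) = 1 := by
        rw [Finset.sum_const, nsmul_eq_mul, mul_one, mul_inv_cancel₀ (ne_of_gt hcard)]
      rw [hx] at h1
      linarith
    have : x ∈ ⋂ i ∈ t, Z i := by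
      simp only [Set.mem_iInter]
      exact fun i hi => hall i hi
    rw [ht] at this
    exact this
  obtain ⟨x, hx⟩ := hne
  have hxZ : ∀ f ∈ C, ‖f x‖ = 1 := by
    intro f hf
    have := Set.mem_iInter.mp hx ⟨f, hf⟩
    exact this
  -- the image of `C` under evaluation at `x`
  set K₀ : Set E := (fun f : C(X, E) => f x) '' C with hK₀def
  have hK₀s : K₀ ⊆ sphere (0 : E) 1 := by
    rintro y ⟨f, hf, rfl⟩
    rw [mem_sphere_zero_iff_norm]
    exact hxZ f hf
  have hK₀c : Convex ℝ K₀ := by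
    rintro y ⟨f, hf, rfl⟩ z ⟨g, hg, rfl⟩ a b ha hb hab
    refine ⟨a • f + b • g, hconv hf hg ha hb hab, ?_⟩
    simp
  obtain ⟨K, hK₀K, hKmax⟩ := exists_maxConvexIn_superset K₀ hK₀s hK₀c
  refine ⟨x, K, hKmax, ?_⟩
  -- `Vset A x K` is a convex subset of the sphere containing `C`
  have hCV : C ⊆ Vset A x K := fun f hf =>
    ⟨(hCsub hf).1, (hCsub hf).2, hK₀K ⟨f, hf, rfl⟩⟩
  have hVsub : Vset A x K ⊆ unitSphereOf A := fun f hf => ⟨hf.1, hf.2.1⟩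
  have hVconv : Convex ℝ (Vset A x K) := by
    rintro f ⟨hfA, hfn, hfK⟩ g ⟨hgA, hgn, hgK⟩ a b ha hb hab
    have hmem : a • f + b • g ∈ A :=
      A.add_mem (A.smul_of_tower_mem a hfA) (A.smul_of_tower_mem b hgA)
    have hval : (a • f + b • g) x = a • f x + b • g x := by simp
    have hvalK : a • f x + b • g x ∈ K := hKmax.2.1 hfK hgK ha hb hab
    have hvnorm : ‖a • f x + b • g x‖ = 1 :=
      mem_sphere_zero_iff_norm.mp (hKmax.1 hvalK)
    have hub : ‖a • f + b • g‖ ≤ 1 := by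
      refine (norm_add_le _ _).trans ?_
      rw [norm_smul, norm_smul, hfn, hgn, Real.norm_eq_abs, Real.norm_eq_abs,
        abs_of_nonneg ha, abs_of_nonneg hb]
      simp [hab]
    have hlb : (1 : ℝ) ≤ ‖a • f + b • g‖ := by
      have := (a • f + b • g).norm_coe_le_norm x
      rw [hval, hvnorm] at this
      exact this
    exact ⟨hmem, le_antisymm hub hlb, by rw [hval]; exact hvalK⟩
  exact (hmax (Vset A x K) hVsub hVconv hCV).symm
end

section
/- Let X be a compact Hausdorff space, E a Banach space over 𝕂 ∈ {ℝ, ℂ}, and A a 𝕂-linear subspace of C(X,E). Then Θ(A) ⊆ τ(A), τ(A) ⊆ η₂(A) ∩ X₀, and η₂(A) ∩ X₀ ⊆ η₁(A). -/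
open Set Metric

variable {𝕂 : Type*} [RCLike 𝕂]
variable {X : Type*} [TopologicalSpace X] [CompactSpace X] [T2Space X]
variable {E : Type*} [NormedAddCommGroup E] [NormedSpace ℝ E] [NormedSpace 𝕂 E]
  [IsScalarTower ℝ 𝕂 E] [CompleteSpace E]

/-- The set `Θ(A)` of strong boundary points of a set `A` of functions in `C(X,E)`. -/
def strongBoundaryPoints (A : Set C(X, E)) : Set X :=
  {x | ∀ U ∈ nhds x, ∀ ε : ℝ, 0 < ε → ∀ u : E, ‖u‖ = 1 →
    ∃ f ∈ A, ‖f‖ = 1 ∧ f x = u ∧ ∀ y, y ∉ U → ‖f y‖ < ε}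

/-- The set `τ(A)`: the strong boundary condition required only for `ε = 1`. -/
def tauPoints (A : Set C(X, E)) : Set X :=
  {x | ∀ U ∈ nhds x, ∀ u : E, ‖u‖ = 1 →
    ∃ f ∈ A, ‖f‖ = 1 ∧ f x = u ∧ ∀ y, y ∉ U → ‖f y‖ < 1}

/-- `η₁(A)`: points of type one for `A`. -/
def typeOnePoints (A : Subspace 𝕂 C(X, E)) : Set X :=
  {x | ∀ K : Set E, MaxConvexIn (sphere (0 : E) 1) K →
    MaxConvexIn (unitSphereOf A) (Vset A x K)}

/-- `η₂(A)`: points of type two for `A`. -/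
def typeTwoPoints (A : Subspace 𝕂 C(X, E)) : Set X :=
  {x | ∀ K K' : Set E, MaxConvexIn (sphere (0 : E) 1) K →
    MaxConvexIn (sphere (0 : E) 1) K' →
    ∀ y : X, Vset A x K ⊆ Vset A y K' → x = y}

/-- `X₀ = {x ∈ X : S(E) ⊆ {f(x) : f ∈ S(A)}}`. -/
def X0set (A : Subspace 𝕂 C(X, E)) : Set X :=
  {x | sphere (0 : E) 1 ⊆ (fun f : C(X, E) => f x) '' unitSphereOf A}

/-!
A τ-point `x` is of type two: for `y ≠ x`, a function of `A` that takes a value of `K` at `x` and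
has norm `< 1` at `y` lies in `V_{x,K}` but in no `V_{y,K'}`.

For `η₂(A) ∩ X₀ ⊆ η₁(A)`, the key fact is that the functions of a convex subset `C` of the unit
sphere of `C(X,E)` have a common peak point `y`: finitely many of them have an average of norm one,
attained at a point where each of them must then have norm one, and compactness of `X` turns this
finite intersection property into a common point. The values at `y` of the members of `C` form a
convex subset of `S(E)`, contained in a maximal one `K'`. If `C ⊇ V_{x,K}` then
`V_{x,K} ⊆ V_{y,K'}`, so `y = x` by type two, and maximality of `K` together with `x ∈ X₀` forces
`C = V_{x,K}`.
-/

lemma exists_maxConvexIn_superset_s2 {M : Type*} [AddCommGroup M] [Module ℝ M] {S C : Set M}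
    (hCS : C ⊆ S) (hC : Convex ℝ C) : ∃ K, C ⊆ K ∧ MaxConvexIn S K := by
  have hchain : ∀ c ⊆ {D : Set M | D ⊆ S ∧ Convex ℝ D}, IsChain (· ⊆ ·) c → c.Nonempty →
      ∃ ub ∈ {D : Set M | D ⊆ S ∧ Convex ℝ D}, ∀ s ∈ c, s ⊆ ub := by
    intro c hc hc_chain _
    refine ⟨⋃₀ c, ⟨sUnion_subset fun s hs => (hc hs).1, ?_⟩, fun s hs => subset_sUnion_of_mem hs⟩
    exact hc_chain.directedOn.convex_sUnion fun s hs => (hc hs).2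
  obtain ⟨K, hCK, hK⟩ := zorn_subset_nonempty _ hchain C ⟨hCS, hC⟩
  exact ⟨K, hCK, hK.prop.1, hK.prop.2, fun C' h1 h2 h3 => hK.eq_of_ge ⟨h1, h2⟩ h3⟩

lemma MaxConvexIn.nonempty {M : Type*} [AddCommGroup M] [Module ℝ M] {S K : Set M}
    (hK : MaxConvexIn S K) (hS : S.Nonempty) : K.Nonempty := by
  obtain ⟨u, hu⟩ := hS
  rw [nonempty_iff_ne_empty]
  rintro rfl
  exact singleton_ne_empty u
    (hK.2.2 {u} (singleton_subset_iff.2 hu) (convex_singleton u) (empty_subset _))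

lemma Finset.norm_eq_one_of_norm_sum_smul_eq_one {ι F : Type*} [SeminormedAddCommGroup F]
    [NormedSpace ℝ F] {s : Finset ι} {w : ι → ℝ} {z : ι → F} (hw₀ : ∀ i ∈ s, 0 ≤ w i)
    (hw₁ : ∑ i ∈ s, w i = 1) (hz : ∀ i ∈ s, ‖z i‖ ≤ 1) (hsum : ‖∑ i ∈ s, w i • z i‖ = 1)
    {i : ι} (hi : i ∈ s) (hwi : w i ≠ 0) : ‖z i‖ = 1 := by
  have hle : ∀ j ∈ s, w j * ‖z j‖ ≤ w j := fun j hj =>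
    mul_le_of_le_one_right (hw₀ j hj) (hz j hj)
  have hge : ∑ j ∈ s, w j ≤ ∑ j ∈ s, w j * ‖z j‖ :=
    calc ∑ j ∈ s, w j = ‖∑ j ∈ s, w j • z j‖ := by rw [hsum, hw₁]
      _ ≤ ∑ j ∈ s, ‖w j • z j‖ := norm_sum_le _ _
      _ = ∑ j ∈ s, w j * ‖z j‖ :=
        Finset.sum_congr rfl fun j hj => by rw [norm_smul, Real.norm_of_nonneg (hw₀ j hj)]
  have heq := (Finset.sum_eq_sum_iff_of_le hle).1 (le_antisymm (Finset.sum_le_sum hle) hge) i hi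
  exact (mul_eq_left₀ hwi).1 heq

lemma ContinuousMap.exists_forall_norm_apply_eq_one_of_convex {Y F : Type*} [TopologicalSpace Y]
    [CompactSpace Y] [Nonempty Y] [NormedAddCommGroup F] [NormedSpace ℝ F] {C : Set C(Y, F)}
    (hC : Convex ℝ C) (hC₁ : ∀ g ∈ C, ‖g‖ = 1) : ∃ y, ∀ g ∈ C, ‖g y‖ = 1 := by
  suffices h : (⋂ g : C, {y | ‖(g : C(Y, F)) y‖ = 1}).Nonempty by
    obtain ⟨y, hy⟩ := h
    exact ⟨y, fun g hg => mem_iInter.1 hy ⟨g, hg⟩⟩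
  refine CompactSpace.iInter_nonempty (fun g => isClosed_eq (map_continuous _).norm
    continuous_const) fun s => ?_
  rcases s.eq_empty_or_nonempty with rfl | hs
  · simp
  set w : C → ℝ := fun _ => (s.card : ℝ)⁻¹
  have hw₀ : ∀ g ∈ s, 0 ≤ w g := fun _ _ => by positivity
  have hw₁ : ∑ g ∈ s, w g = 1 := by
    simp [w, hs.card_pos.ne']
  set m : C(Y, F) := ∑ g ∈ s, w g • (g : C(Y, F))
  have hm : ‖m‖ = 1 := hC₁ m (hC.sum_mem hw₀ hw₁ fun g _ => g.2)
  obtain ⟨y, -, hy⟩ := isCompact_univ.exists_isMaxOn univ_nonempty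
    (map_continuous m).norm.continuousOn
  have hmy : ‖m y‖ = 1 := le_antisymm (hm ▸ m.norm_coe_le_norm y)
    (hm ▸ (m.norm_le (norm_nonneg _)).2 fun z => hy (mem_univ z))
  refine ⟨y, mem_iInter₂.2 fun g hg => ?_⟩
  refine Finset.norm_eq_one_of_norm_sum_smul_eq_one hw₀ hw₁
    (fun g _ => hC₁ g g.2 ▸ (g : C(Y, F)).norm_coe_le_norm y) ?_ hg (by positivity)
  simpa [m, ContinuousMap.sum_apply] using hmy

omit [T2Space X] [CompleteSpace E] in
lemma convex_Vset (A : Subspace 𝕂 C(X, E)) (x : X) {K : Set E}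
    (hKS : K ⊆ sphere (0 : E) 1) (hK : Convex ℝ K) : Convex ℝ (Vset A x K) := by
  intro f hf g hg a b ha hb hab
  have hKx : (a • f + b • g) x ∈ K := by simpa using hK hf.2.2 hg.2.2 ha hb hab
  have hle : ‖a • f + b • g‖ ≤ 1 :=
    calc ‖a • f + b • g‖ ≤ a * ‖f‖ + b * ‖g‖ := norm_add_le_of_le
          (by rw [norm_smul, Real.norm_of_nonneg ha]) (by rw [norm_smul, Real.norm_of_nonneg hb])
      _ = 1 := by rw [hf.2.1, hg.2.1, mul_one, mul_one, hab]
  have hge : 1 ≤ ‖a • f + b • g‖ :=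
    mem_sphere_zero_iff_norm.1 (hKS hKx) ▸ ContinuousMap.norm_coe_le_norm _ x
  exact ⟨A.add_mem (A.smul_of_tower_mem a hf.1) (A.smul_of_tower_mem b hg.1),
    le_antisymm hle hge, hKx⟩

omit [T2Space X] [NormedSpace ℝ E] [CompleteSpace E] in
lemma strongBoundaryPoints_subset_tauPoints (A : Set C(X, E)) :
    strongBoundaryPoints A ⊆ tauPoints A :=
  fun _ hx U hU u hu => hx U hU 1 one_pos u hu

omit [T2Space X] [NormedSpace ℝ E] [IsScalarTower ℝ 𝕂 E] [CompleteSpace E] in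
lemma tauPoints_subset_X0set (A : Subspace 𝕂 C(X, E)) :
    tauPoints (A : Set C(X, E)) ⊆ X0set A := by
  intro x hx u hu
  obtain ⟨f, hfA, hf₁, hfx, -⟩ := hx univ Filter.univ_mem u (mem_sphere_zero_iff_norm.1 hu)
  exact ⟨f, ⟨hfA, hf₁⟩, hfx⟩

omit [IsScalarTower ℝ 𝕂 E] [CompleteSpace E] in
lemma tauPoints_subset_typeTwoPoints [Nontrivial E] (A : Subspace 𝕂 C(X, E)) :
    tauPoints (A : Set C(X, E)) ⊆ typeTwoPoints A := by
  intro x hx K K' hK hK' y hsub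
  by_contra hxy
  obtain ⟨u, huK⟩ := hK.nonempty (NormedSpace.sphere_nonempty.2 zero_le_one)
  obtain ⟨f, hfA, hf₁, hfx, hf_lt⟩ := hx {y}ᶜ (isOpen_compl_singleton.mem_nhds hxy) u
    (mem_sphere_zero_iff_norm.1 (hK.1 huK))
  have hfy : ‖f y‖ = 1 := mem_sphere_zero_iff_norm.1 (hK'.1 (hsub ⟨hfA, hf₁, hfx ▸ huK⟩).2.2)
  exact (hf_lt y (not_not.2 rfl)).ne hfy

omit [T2Space X] [CompleteSpace E] in
lemma typeTwoPoints_inter_X0set_subset_typeOnePoints (A : Subspace 𝕂 C(X, E)) :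
    typeTwoPoints A ∩ X0set A ⊆ typeOnePoints A := by
  rintro x ⟨hx₂, hx₀⟩ K hK
  refine ⟨fun f hf => ⟨hf.1, hf.2.1⟩, convex_Vset A x hK.1 hK.2.1, fun C hCS hC hVC => ?_⟩
  have : Nonempty X := ⟨x⟩
  obtain ⟨y, hy⟩ :=
    ContinuousMap.exists_forall_norm_apply_eq_one_of_convex hC fun g hg => (hCS hg).2
  set Cy := ContinuousMap.evalCLM ℝ y '' C
  have hCyS : Cy ⊆ sphere 0 1 := by
    rintro _ ⟨g, hg, rfl⟩
    exact mem_sphere_zero_iff_norm.2 (hy g hg)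
  have hCy : Convex ℝ Cy := hC.linear_image (ContinuousMap.evalCLM ℝ y).toLinearMap
  obtain ⟨K', hCyK', hK'⟩ := exists_maxConvexIn_superset_s2 hCyS hCy
  obtain rfl : x = y := hx₂ K K' hK hK' y fun f hf => ⟨hf.1, hf.2.1, hCyK' ⟨f, hVC hf, rfl⟩⟩
  have hKCx : K ⊆ Cy := by
    intro u hu
    obtain ⟨f, hf, rfl⟩ := hx₀ (hK.1 hu)
    exact ⟨f, hVC ⟨hf.1, hf.2, hu⟩, rfl⟩
  have hCx : Cy = K := hK.2.2 Cy hCyS hCy hKCx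
  exact Subset.antisymm (fun g hg => ⟨(hCS hg).1, (hCS hg).2, hCx ▸ ⟨g, hg, rfl⟩⟩) hVC

/-- `Θ(A) ⊆ τ(A)`, `τ(A) ⊆ η₂(A) ∩ X₀` and `η₂(A) ∩ X₀ ⊆ η₁(A)`. -/
theorem stmt2 [Nontrivial E] (A : Subspace 𝕂 C(X, E)) :
    strongBoundaryPoints (A : Set C(X, E)) ⊆ tauPoints (A : Set C(X, E)) ∧
    tauPoints (A : Set C(X, E)) ⊆ typeTwoPoints A ∩ X0set A ∧
    typeTwoPoints A ∩ X0set A ⊆ typeOnePoints A :=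
  ⟨strongBoundaryPoints_subset_tauPoints _,
    subset_inter (tauPoints_subset_typeTwoPoints A) (tauPoints_subset_X0set A),
    typeTwoPoints_inter_X0set_subset_typeOnePoints A⟩
end
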